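/- arXiv:math/0510678 — 8 statements merged into one kernel-verified Lean document; each statement's English description precedes it below -/
import Mathlib

section
/- Let X, Y be normed linear spaces, K ⊆ X a convex cone with non-empty interior, and H : X → Y a K-monotone dominated mapping with dominating function h : X → ℝ. If h is continuous at a point x ∈ X, then H is continuous at x. -/
/-!
Choose `k₀` with `closedBall k₀ r ⊆ K` and, for `y` near `x`, put `z = y + (‖y - x‖ / r) • k₀`.
Then both `z - y` and `z - x` lie in the cone `K`, so domination bounds `‖H y - H x‖` by
`(h z - h y) + (h z - h x)`, and this tends to `0` because `z → x` and `h` is continuous at `x`.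
-/

open Metric Filter Topology

def IsMonotoneDominated {X Y : Type*} [AddGroup X] [SeminormedAddCommGroup Y]
    (K : Set X) (H : X → Y) (h : X → ℝ) : Prop :=
  ∀ x : X, ∀ k ∈ K, ‖H (x + k) - H x‖ ≤ h (x + k) - h x

theorem IsMonotoneDominated.norm_sub_le {X Y : Type*} [AddCommGroup X]
    [SeminormedAddCommGroup Y] {K : Set X} {H : X → Y} {h : X → ℝ}
    (hdom : IsMonotoneDominated K H h) {x y z : X} (hzy : z - y ∈ K) (hzx : z - x ∈ K) :
    ‖H y - H x‖ ≤ (h z - h y) + (h z - h x) := by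
  have hy := hdom y (z - y) hzy
  have hx := hdom x (z - x) hzx
  rw [add_sub_cancel] at hx hy
  calc ‖H y - H x‖ ≤ ‖H y - H z‖ + ‖H z - H x‖ := norm_sub_le_norm_sub_add_norm_sub _ _ _
    _ = ‖H z - H y‖ + ‖H z - H x‖ := by rw [norm_sub_rev]
    _ ≤ (h z - h y) + (h z - h x) := add_le_add hy hx

theorem smul_add_mem_of_closedBall_subset {X : Type*} [NormedAddCommGroup X]
    [NormedSpace ℝ X] {K : Set X} (hK : ∀ (c : ℝ) (x : X), 0 ≤ c → x ∈ K → c • x ∈ K)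
    {k₀ : X} {r t : ℝ} (hr : 0 ≤ r) (hball : closedBall k₀ r ⊆ K) (ht : 0 ≤ t) {u : X}
    (hu : ‖u‖ ≤ t * r) :
    t • k₀ + u ∈ K := by
  rcases ht.eq_or_lt with rfl | ht
  · have hu0 : u = 0 := norm_le_zero_iff.1 (by simpa using hu)
    simpa [hu0] using hK 0 k₀ le_rfl (hball (mem_closedBall_self hr))
  · have hmem : k₀ + t⁻¹ • u ∈ closedBall k₀ r := by
      rw [mem_closedBall, dist_eq_norm, add_sub_cancel_left, norm_smul,
        Real.norm_of_nonneg (inv_nonneg.2 ht.le), inv_mul_le_iff₀ ht]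
      exact hu
    simpa [smul_add, smul_inv_smul₀ ht.ne'] using hK t _ ht.le (hball hmem)

theorem stmt_2_general {X Y : Type*} [NormedAddCommGroup X] [NormedSpace ℝ X]
    [NormedAddCommGroup Y]
    (K : Set X) (hK : ∀ (c : ℝ) (x : X), 0 ≤ c → x ∈ K → c • x ∈ K)
    (hKint : (interior K).Nonempty)
    (H : X → Y) (h : X → ℝ)
    (hdom : ∀ x : X, ∀ k ∈ K, ‖H (x + k) - H x‖ ≤ h (x + k) - h x)
    (x : X) (hcont : ContinuousAt h x) : ContinuousAt H x := by
  obtain ⟨k₀, hk₀⟩ := hKint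
  obtain ⟨r, hr, hball⟩ :=
    nhds_basis_closedBall.mem_iff.1 (mem_interior_iff_mem_nhds.1 hk₀)
  set z : X → X := fun y => y + (‖y - x‖ / r) • k₀
  have hbound (y : X) : ‖H y - H x‖ ≤ (h (z y) - h y) + (h (z y) - h x) := by
    have ht : 0 ≤ ‖y - x‖ / r := by positivity
    refine IsMonotoneDominated.norm_sub_le hdom ?_ ?_
    · simpa [z] using hK _ k₀ ht (hball (mem_closedBall_self hr.le))
    · have := smul_add_mem_of_closedBall_subset hK hr.le hball ht (u := y - x)
        (div_mul_cancel₀ _ hr.ne').ge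
      convert this using 1
      simp only [z]
      abel
  have hz : ContinuousAt z x := by fun_prop
  have hzx : z x = x := by simp [z]
  have hbound_cont : ContinuousAt (fun y => (h (z y) - h y) + (h (z y) - h x)) x := by
    have hhz := hcont.comp_of_eq hz hzx
    exact (hhz.sub hcont).add (hhz.sub continuousAt_const)
  rw [ContinuousAt, tendsto_iff_norm_sub_tendsto_zero]
  refine squeeze_zero (fun _ => norm_nonneg _) hbound ?_
  simpa [hzx] using hbound_cont.tendsto

theorem stmt_2 {X Y : Type*} [NormedAddCommGroup X] [NormedSpace ℝ X]
    [NormedAddCommGroup Y] [NormedSpace ℝ Y]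
    (K : Set X) (hK : ∀ (c : ℝ) (x : X), 0 ≤ c → x ∈ K → c • x ∈ K)
    (hKconv : Convex ℝ K) (hKint : (interior K).Nonempty)
    (H : X → Y) (h : X → ℝ)
    (hdom : ∀ x : X, ∀ k ∈ K, ‖H (x + k) - H x‖ ≤ h (x + k) - h x)
    (x : X) (hcont : ContinuousAt h x) : ContinuousAt H x :=
  stmt_2_general K hK hKint H h hdom x hcont
end

section
/- Let X, Y be normed linear spaces, K ⊆ X a convex cone with non-empty interior, and H : X → Y a K-monotone dominated mapping with dominating function h. If h is pointwise-Lipschitz at x ∈ X (i.e., limsup_{t→x} |h(t)−h(x)|/∥t−x∥ < ∞), then H is pointwise-Lipschitz at x (i.e., limsup_{t→x} ∥H(t)−H(x)∥/∥t−x∥ < ∞). -/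
/-! An interior point `k₀` of the cone `K` lets one write every increment `u = t - x` as `k - m`
with `k, m ∈ K` and `‖k‖, ‖m‖ = O(‖u‖)`: take `m` the multiple of `k₀` proportional to `‖u‖`.
Domination at `x` with increment `k` and at `t` with increment `m`, both ending at
`x + k = t + m`, bounds `‖H t - H x‖` by `2 (h (x + k) - h x) - (h t - h x) = O(‖u‖)`. -/

open Filter Topology Asymptotics

theorem limsup_ofReal_norm_sub_div_lt_top_iff_isBigO {X E : Type*} [NormedAddCommGroup X]
    [NormedAddCommGroup E] (f : X → E) (x : X) :
    limsup (fun t => ENNReal.ofReal (‖f t - f x‖ / ‖t - x‖)) (𝓝[≠] x) < ⊤ ↔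
      (fun t => f t - f x) =O[𝓝 x] (fun t => t - x) := by
  constructor
  · intro hlim
    obtain ⟨b, hlim_lt, hb⟩ := exists_between hlim
    refine IsBigO.of_bound b.toReal ?_
    have hratio := eventually_lt_of_limsup_lt hlim_lt
    rw [eventually_nhdsWithin_iff] at hratio
    filter_upwards [hratio] with t ht
    rcases eq_or_ne t x with rfl | htx
    · simp
    · have hpos : 0 < ‖t - x‖ := norm_pos_iff.mpr (sub_ne_zero.mpr htx)
      rw [← div_le_iff₀ hpos, ← ENNReal.ofReal_le_iff_le_toReal hb.ne]
      exact (ht htx).le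
  · intro hO
    obtain ⟨C, -, hC⟩ := hO.exists_nonneg
    refine (limsup_le_of_le (by isBoundedDefault) ?_).trans_lt
      (ENNReal.ofReal_lt_top (r := C))
    filter_upwards [nhdsWithin_le_nhds hC.bound, self_mem_nhdsWithin] with t ht htx
    have hpos : 0 < ‖t - x‖ := norm_pos_iff.mpr (sub_ne_zero.mpr htx)
    exact ENNReal.ofReal_le_ofReal ((div_le_iff₀ hpos).mpr ht)

theorem exists_mem_cone_add_mem_cone_norm_le {X : Type*} [NormedAddCommGroup X]
    [NormedSpace ℝ X] {K : Set X}
    (hK : ∀ (c : ℝ) (x : X), 0 ≤ c → x ∈ K → c • x ∈ K) (hKint : (interior K).Nonempty) :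
    ∃ A : ℝ, ∀ u : X, ∃ m ∈ K, u + m ∈ K ∧ ‖u + m‖ ≤ A * ‖u‖ := by
  obtain ⟨k₀, hk₀⟩ := hKint
  obtain ⟨r, hr, hball⟩ := Metric.isOpen_iff.mp isOpen_interior k₀ hk₀
  have hballK : Metric.ball k₀ r ⊆ K := hball.trans interior_subset
  have hk₀K : k₀ ∈ K := hballK (Metric.mem_ball_self hr)
  refine ⟨1 + 2 * ‖k₀‖ / r, fun u => ?_⟩
  rcases eq_or_ne u 0 with rfl | hu
  · have h0K : (0 : X) ∈ K := by simpa using hK 0 k₀ le_rfl hk₀K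
    exact ⟨0, h0K, by simpa using h0K, by simp⟩
  have hupos : 0 < ‖u‖ := norm_pos_iff.mpr hu
  set s : ℝ := 2 * ‖u‖ / r
  have hspos : 0 < s := by positivity
  have hmem : s⁻¹ • u + k₀ ∈ K := by
    refine hballK ?_
    rw [Metric.mem_ball, dist_eq_norm, add_sub_cancel_right, norm_smul,
      Real.norm_of_nonneg (inv_nonneg.mpr hspos.le)]
    calc s⁻¹ * ‖u‖ = r / 2 := by simp only [s]; field_simp
      _ < r := half_lt_self hr
  refine ⟨s • k₀, hK s k₀ hspos.le hk₀K, ?_, ?_⟩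
  · have := hK s _ hspos.le hmem
    rwa [smul_add, smul_inv_smul₀ hspos.ne'] at this
  · calc ‖u + s • k₀‖ ≤ ‖u‖ + ‖s • k₀‖ := norm_add_le _ _
      _ = ‖u‖ + s * ‖k₀‖ := by rw [norm_smul, Real.norm_of_nonneg hspos.le]
      _ = (1 + 2 * ‖k₀‖ / r) * ‖u‖ := by ring

theorem norm_sub_le_of_cone_dominated {X Y : Type*} [AddCommGroup X] [NormedAddCommGroup Y]
    {K : Set X} {H : X → Y} {h : X → ℝ}
    (hdom : ∀ x : X, ∀ k ∈ K, ‖H (x + k) - H x‖ ≤ h (x + k) - h x)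
    {x t m : X} (hm : m ∈ K) (hk : t - x + m ∈ K) :
    ‖H t - H x‖ ≤ 2 * (h (x + (t - x + m)) - h x) - (h t - h x) := by
  have hxk : x + (t - x + m) = t + m := by abel
  have hx := hdom x _ hk
  have ht := hdom t m hm
  rw [hxk] at hx ⊢
  calc ‖H t - H x‖ = ‖(H (t + m) - H x) - (H (t + m) - H t)‖ := by congr 1; abel
    _ ≤ ‖H (t + m) - H x‖ + ‖H (t + m) - H t‖ := norm_sub_le _ _
    _ ≤ 2 * (h (t + m) - h x) - (h t - h x) := by linarith

theorem stmt_3_general {X Y : Type*} [NormedAddCommGroup X] [NormedSpace ℝ X]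
    [NormedAddCommGroup Y] [NormedSpace ℝ Y]
    (K : Set X) (hK : ∀ (c : ℝ) (x : X), 0 ≤ c → x ∈ K → c • x ∈ K)
    (hKint : (interior K).Nonempty)
    (H : X → Y) (h : X → ℝ)
    (hdom : ∀ x : X, ∀ k ∈ K, ‖H (x + k) - H x‖ ≤ h (x + k) - h x)
    (x : X)
    (hlip : limsup (fun t => ENNReal.ofReal (|h t - h x| / ‖t - x‖)) (nhdsWithin x {x}ᶜ) < ⊤) :
    limsup (fun t => ENNReal.ofReal (‖H t - H x‖ / ‖t - x‖)) (nhdsWithin x {x}ᶜ) < ⊤ := by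
  simp only [← Real.norm_eq_abs] at hlip
  rw [limsup_ofReal_norm_sub_div_lt_top_iff_isBigO] at hlip ⊢
  obtain ⟨A, hA⟩ := exists_mem_cone_add_mem_cone_norm_le hK hKint
  choose m hmK hkK hkA using hA
  set k : X → X := fun t => t - x + m (t - x)
  have hk : k =O[𝓝 x] (fun t => t - x) := isBigO_of_le' _ fun t => hkA (t - x)
  have hk_tendsto : Tendsto (fun t => x + k t) (𝓝 x) (𝓝 x) := by
    simpa using (hk.trans_tendsto (tendsto_sub_nhds_zero_iff.mpr tendsto_id)).const_add x
  have hhk : (fun t => h (x + k t) - h x) =O[𝓝 x] (fun t => t - x) := by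
    have hcomp := hlip.comp_tendsto hk_tendsto
    simp only [Function.comp_def, add_sub_cancel_left] at hcomp
    exact hcomp.trans hk
  refine (isBigO_of_le _ fun t => ?_).trans ((hhk.const_mul_left 2).sub hlip)
  exact (norm_sub_le_of_cone_dominated hdom (hmK _) (hkK _)).trans (Real.le_norm_self _)

theorem stmt_3 {X Y : Type*} [NormedAddCommGroup X] [NormedSpace ℝ X]
    [NormedAddCommGroup Y] [NormedSpace ℝ Y]
    (K : Set X) (hK : ∀ (c : ℝ) (x : X), 0 ≤ c → x ∈ K → c • x ∈ K)
    (hKconv : Convex ℝ K) (hKint : (interior K).Nonempty)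
    (H : X → Y) (h : X → ℝ)
    (hdom : ∀ x : X, ∀ k ∈ K, ‖H (x + k) - H x‖ ≤ h (x + k) - h x)
    (x : X)
    (hlip : limsup (fun t => ENNReal.ofReal (|h t - h x| / ‖t - x‖)) (nhdsWithin x {x}ᶜ) < ⊤) :
    limsup (fun t => ENNReal.ofReal (‖H t - H x‖ / ‖t - x‖)) (nhdsWithin x {x}ᶜ) < ⊤ :=
  stmt_3_general K hK hKint H h hdom x hlip
end

section
/- Let X be a normed linear space, K ⊆ X a closed convex cone with non-empty interior, and f : X → ℝ a K-increasing function. If f is Gâteaux differentiable at x ∈ X, then f is pointwise-Lipschitz at x. -/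
/-!
If the ball of radius `r` about `e` lies in the cone `K`, then for every `h` the vector
`(2‖h‖/r) • e` dominates both `h` and `-h` in the order of `K`. Hence a `K`-increasing `f`
satisfies `f (x - s • e) ≤ f (x + h) ≤ f (x + s • e)` with `s = 2‖h‖/r`, and the two outer
values differ from `f x` by `O(s) = O(‖h‖)` because `f` has directional derivatives at `x`
along `e` and `-e`.
-/

open Filter Topology Asymptotics

theorem exists_pos_smul_add_mem_of_mem_interior {X : Type*} [NormedAddCommGroup X]
    [NormedSpace ℝ X] {K : Set X} (hK : ∀ (c : ℝ) (x : X), 0 ≤ c → x ∈ K → c • x ∈ K)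
    {e : X} (he : e ∈ interior K) : ∃ c > 0, ∀ h : X, (c * ‖h‖) • e + h ∈ K := by
  obtain ⟨r, hr, hball⟩ := Metric.isOpen_iff.1 isOpen_interior e he
  refine ⟨2 / r, by positivity, fun h => ?_⟩
  rcases eq_or_ne h 0 with rfl | hh
  · simpa using hK 0 e le_rfl (interior_subset he)
  set s := 2 / r * ‖h‖
  have hs : 0 < s := by positivity
  have hmem : e + s⁻¹ • h ∈ K := by
    refine interior_subset (hball ?_)
    rw [Metric.mem_ball, dist_eq_norm, add_sub_cancel_left, norm_smul, Real.norm_eq_abs,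
      abs_inv, abs_of_pos hs, inv_mul_eq_div, div_lt_iff₀ hs]
    have hrs : r * s = 2 * ‖h‖ := by simp only [s]; field_simp
    linarith [norm_pos_iff.2 hh]
  simpa [smul_add, smul_smul, hs.ne'] using hK s _ hs.le hmem

theorem abs_sub_le_of_sub_mem_of_add_mem {X : Type*} [AddCommGroup X] {K : Set X} {f : X → ℝ}
    (hmono : ∀ x y : X, y - x ∈ K → f x ≤ f y) {x h u : X} (hsub : u - h ∈ K) (hadd : u + h ∈ K) :
    |f (x + h) - f x| ≤ |f (x + u) - f x| + |f (x - u) - f x| := by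
  have hupper : f (x + h) ≤ f (x + u) := hmono _ _ (by rwa [add_sub_add_left_eq_sub])
  have hlower : f (x - u) ≤ f (x + h) := hmono _ _ (by convert hadd using 1; abel)
  rw [abs_le]
  constructor <;>
  linarith [le_abs_self (f (x + u) - f x), neg_abs_le (f (x - u) - f x),
    abs_nonneg (f (x + u) - f x), abs_nonneg (f (x - u) - f x)]

theorem hasDerivAt_comp_add_smul_of_tendsto {X : Type*} [AddCommGroup X] [Module ℝ X]
    {f : X → ℝ} {x v : X} {L : ℝ}
    (h : Tendsto (fun t : ℝ => (f (x + t • v) - f x) / t) (𝓝[≠] 0) (𝓝 L)) :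
    HasDerivAt (fun s : ℝ => f (x + s • v)) L 0 := by
  rw [hasDerivAt_iff_tendsto_slope]
  refine h.congr fun t => ?_
  simp [slope_def_field]

theorem HasDerivAt.isBigO_comp_sub {𝕜 E F α : Type*} [NontriviallyNormedField 𝕜]
    [NormedAddCommGroup E] [NormedSpace 𝕜 E] [Norm F] {g : 𝕜 → E} {L : E} {a : 𝕜}
    (hg : HasDerivAt g L a) {l : Filter α} {s : α → 𝕜} {v : α → F} (hs : Tendsto s l (𝓝 a))
    (hsv : (fun b => s b - a) =O[l] v) : (fun b => g (s b) - g a) =O[l] v :=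
  (hg.isBigO_sub.comp_tendsto hs).trans hsv

theorem limsup_ofReal_norm_div_lt_top_of_isBigO {α E F : Type*} [Norm E]
    [SeminormedAddCommGroup F] {l : Filter α} {u : α → E} {v : α → F} (h : u =O[l] v) :
    limsup (fun a => ENNReal.ofReal (‖u a‖ / ‖v a‖)) l < ⊤ := by
  obtain ⟨c, hc, hcuv⟩ := h.exists_pos
  refine (limsup_le_of_le (by isBoundedDefault) ?_).trans_lt (ENNReal.ofReal_lt_top (r := c))
  filter_upwards [hcuv.bound] with a ha
  exact ENNReal.ofReal_le_ofReal (div_le_of_le_mul₀ (norm_nonneg _) hc.le ha)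

theorem isBigO_sub_of_hasDerivAt_smul_of_mem_interior {X : Type*} [NormedAddCommGroup X]
    [NormedSpace ℝ X] {K : Set X} (hK : ∀ (c : ℝ) (x : X), 0 ≤ c → x ∈ K → c • x ∈ K)
    {f : X → ℝ} (hmono : ∀ x y : X, y - x ∈ K → f x ≤ f y) {x e : X} (he : e ∈ interior K)
    {L₁ L₂ : ℝ} (hdpos : HasDerivAt (fun s : ℝ => f (x + s • e)) L₁ 0)
    (hdneg : HasDerivAt (fun s : ℝ => f (x - s • e)) L₂ 0) :
    (fun y => f y - f x) =O[𝓝 x] fun y => y - x := by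
  obtain ⟨c, hc, hcK⟩ := exists_pos_smul_add_mem_of_mem_interior hK he
  set s : X → ℝ := fun y => c * ‖y - x‖
  have hs : Tendsto s (𝓝 x) (𝓝 0) := by
    simpa [s] using ((continuous_sub_right x).norm.const_mul c).tendsto x
  have hs_bigO : (fun y => s y - 0) =O[𝓝 x] fun y => y - x := by
    simpa only [sub_zero] using ((isBigO_refl (fun y => ‖y - x‖) _).const_mul_left c).trans
      (isBigO_norm_left.2 (isBigO_refl _ _))
  have hOpos : (fun y => f (x + s y • e) - f x) =O[𝓝 x] fun y => y - x := by
    simpa using hdpos.isBigO_comp_sub hs hs_bigO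
  have hOneg : (fun y => f (x - s y • e) - f x) =O[𝓝 x] fun y => y - x := by
    simpa using hdneg.isBigO_comp_sub hs hs_bigO
  refine (isBigO_of_le _ fun y => ?_).trans (hOpos.norm_left.add hOneg.norm_left)
  have hsandwich := abs_sub_le_of_sub_mem_of_add_mem hmono (x := x) (u := s y • e)
    (by simpa only [norm_neg, ← sub_eq_add_neg] using hcK (-(y - x))) (hcK (y - x))
  rw [add_sub_cancel] at hsandwich
  simp only [Real.norm_eq_abs]
  exact hsandwich.trans (le_abs_self _)

theorem stmt_5_general {X : Type*} [NormedAddCommGroup X] [NormedSpace ℝ X]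
    (K : Set X) (hK : ∀ (c : ℝ) (x : X), 0 ≤ c → x ∈ K → c • x ∈ K)
    (hKint : (interior K).Nonempty)
    (f : X → ℝ) (hmono : ∀ x y : X, y - x ∈ K → f x ≤ f y)
    (x : X)
    (hgat : ∃ T : X →L[ℝ] ℝ, ∀ v : X,
      Tendsto (fun t : ℝ => (f (x + t • v) - f x) / t) (nhdsWithin 0 {(0:ℝ)}ᶜ) (nhds (T v))) :
    limsup (fun t => ENNReal.ofReal (|f t - f x| / ‖t - x‖)) (nhdsWithin x {x}ᶜ) < ⊤ := by
  obtain ⟨T, hT⟩ := hgat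
  obtain ⟨e, he⟩ := hKint
  have hdneg : HasDerivAt (fun s : ℝ => f (x - s • e)) (T (-e)) 0 := by
    simpa [sub_eq_add_neg] using hasDerivAt_comp_add_smul_of_tendsto (hT (-e))
  have hO := isBigO_sub_of_hasDerivAt_smul_of_mem_interior hK hmono he
    (hasDerivAt_comp_add_smul_of_tendsto (hT e)) hdneg
  simpa only [Real.norm_eq_abs] using
    limsup_ofReal_norm_div_lt_top_of_isBigO (hO.mono nhdsWithin_le_nhds)

theorem stmt_5 {X : Type*} [NormedAddCommGroup X] [NormedSpace ℝ X]
    (K : Set X) (hK : ∀ (c : ℝ) (x : X), 0 ≤ c → x ∈ K → c • x ∈ K)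
    (hKconv : Convex ℝ K) (hKcl : IsClosed K) (hKint : (interior K).Nonempty)
    (f : X → ℝ) (hmono : ∀ x y : X, y - x ∈ K → f x ≤ f y)
    (x : X)
    (hgat : ∃ T : X →L[ℝ] ℝ, ∀ v : X,
      Tendsto (fun t : ℝ => (f (x + t • v) - f x) / t) (nhdsWithin 0 {(0:ℝ)}ᶜ) (nhds (T v))) :
    limsup (fun t => ENNReal.ofReal (|f t - f x| / ‖t - x‖)) (nhdsWithin x {x}ᶜ) < ⊤ :=
  stmt_5_general K hK hKint f hmono x hgat
end

section
/- In an ordered normed linear space Y, the positive cone Y₊ is well-based (there is φ ∈ Y* with φ(u) ≥ ∥u∥ for all u ∈ Y₊) if and only if Y₊ has a bounded convex base B with 0 ∉ cl(B), where a base means that for each nonzero y ∈ Y₊ there is a unique λ > 0 with λy ∈ B. -/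
/-!
If `‖u‖ ≤ φ u` on the cone, the slice of the cone at level `φ = 1` is a base; it is bounded
because `‖u‖ ≤ φ u = 1` there, and it stays away from `0` because its closure lies in the closed
hyperplane `φ = 1`. Conversely, separating `0` from the closed convex set `cl B` by Hahn–Banach
gives `g` with `g ≥ 1` on `B`; if `‖b‖ ≤ M` on `B`, then for `u` in the cone with `l • u ∈ B`
we get `l ‖u‖ ≤ M ≤ M l g(u)`, so `φ = M • g` works.
-/

open Set

section

variable {Y : Type*} [NormedAddCommGroup Y] [NormedSpace ℝ Y]

theorem isBounded_inter_level_one {K : Set Y} {φ : Y →L[ℝ] ℝ} (hφ : ∀ u ∈ K, ‖u‖ ≤ φ u) :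
    Bornology.IsBounded (K ∩ {y | φ y = 1}) :=
  isBounded_iff_forall_norm_le.2 ⟨1, fun y ⟨hy, hy1⟩ => hy1 ▸ hφ y hy⟩

theorem zero_notMem_closure_inter_level_one (φ : Y →L[ℝ] ℝ) (S : Set Y) :
    (0 : Y) ∉ closure (S ∩ {y | φ y = 1}) := fun h0 => by
  have hsub : closure (S ∩ {y | φ y = 1}) ⊆ {y | φ y = 1} :=
    closure_minimal inter_subset_right (isClosed_eq φ.continuous continuous_const)
  simpa using hsub h0

theorem existsUnique_smul_mem_inter_level_one {K : Set Y}
    (hK : ∀ c : ℝ, 0 ≤ c → ∀ y ∈ K, c • y ∈ K) (φ : Y →L[ℝ] ℝ) {y : Y} (hy : y ∈ K)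
    (hφy : 0 < φ y) : ∃! l : ℝ, 0 < l ∧ l • y ∈ K ∩ {y | φ y = 1} := by
  refine ⟨(φ y)⁻¹, ⟨inv_pos.2 hφy, hK _ (inv_pos.2 hφy).le y hy, ?_⟩, ?_⟩
  · simp [hφy.ne']
  · rintro l ⟨-, -, hl⟩
    have hl : l * φ y = 1 := by simpa using hl
    exact eq_inv_of_mul_eq_one_left hl

theorem exists_clm_one_le_of_zero_notMem_closure {B : Set Y} (hB : Convex ℝ B)
    (h0 : (0 : Y) ∉ closure B) : ∃ g : Y →L[ℝ] ℝ, ∀ b ∈ B, 1 ≤ g b := by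
  obtain ⟨f, u, hu, hfB⟩ := geometric_hahn_banach_point_closed hB.closure isClosed_closure h0
  rw [map_zero] at hu
  refine ⟨u⁻¹ • f, fun b hb => ?_⟩
  rw [smul_apply, smul_eq_mul, le_inv_mul_iff₀ hu, mul_one]
  exact (hfB b (subset_closure hb)).le

theorem exists_clm_norm_le_of_isBounded_base {K B : Set Y} (hB : Convex ℝ B)
    (hBbdd : Bornology.IsBounded B) (h0 : (0 : Y) ∉ closure B)
    (hbase : ∀ y ∈ K, y ≠ 0 → ∃ l : ℝ, 0 < l ∧ l • y ∈ B) :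
    ∃ φ : Y →L[ℝ] ℝ, ∀ u ∈ K, ‖u‖ ≤ φ u := by
  obtain ⟨g, hg⟩ := exists_clm_one_le_of_zero_notMem_closure hB h0
  obtain ⟨M, hM0, hM⟩ := hBbdd.exists_pos_norm_le
  refine ⟨M • g, fun u hu => ?_⟩
  rcases eq_or_ne u 0 with rfl | hu0
  · simp
  obtain ⟨l, hl, hlu⟩ := hbase u hu hu0
  have hnorm : l * ‖u‖ ≤ M := by simpa [norm_smul, abs_of_pos hl] using hM _ hlu
  have hgu : 1 ≤ l * g u := by simpa using hg _ hlu
  have key : l * ‖u‖ ≤ l * (M * g u) :=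
    calc l * ‖u‖ ≤ M * 1 := by rwa [mul_one]
      _ ≤ M * (l * g u) := mul_le_mul_of_nonneg_left hgu hM0.le
      _ = l * (M * g u) := by ring
  simpa using le_of_mul_le_mul_left key hl

end

theorem stmt_10_general {Y : Type*} [NormedAddCommGroup Y] [NormedSpace ℝ Y] [PartialOrder Y]
    (hsmul : ∀ (c : ℝ) (x y : Y), 0 ≤ c → x ≤ y → c • x ≤ c • y)
    (hconv : Convex ℝ {y : Y | 0 ≤ y}) :
    (∃ φ : Y →L[ℝ] ℝ, ∀ u : Y, 0 ≤ u → ‖u‖ ≤ φ u) ↔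
      (∃ B : Set Y, B ⊆ {y : Y | 0 ≤ y} ∧ Convex ℝ B ∧ Bornology.IsBounded B ∧
        0 ∉ closure B ∧ ∀ y : Y, 0 ≤ y → y ≠ 0 → ∃! l : ℝ, 0 < l ∧ l • y ∈ B) := by
  have hcone : ∀ c : ℝ, 0 ≤ c → ∀ y ∈ {y : Y | 0 ≤ y}, c • y ∈ {y : Y | 0 ≤ y} :=
    fun c hc y hy => by simpa using hsmul c 0 y hc hy
  constructor
  · rintro ⟨φ, hφ⟩
    refine ⟨{y | 0 ≤ y} ∩ {y | φ y = 1}, inter_subset_left,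
      hconv.inter (convex_hyperplane φ.isLinear 1), isBounded_inter_level_one hφ,
      zero_notMem_closure_inter_level_one φ _, fun y hy hy0 => ?_⟩
    exact existsUnique_smul_mem_inter_level_one hcone φ hy
      ((norm_pos_iff.2 hy0).trans_le (hφ y hy))
  · rintro ⟨B, -, hB, hBbdd, h0, hbase⟩
    exact exists_clm_norm_le_of_isBounded_base hB hBbdd h0 fun y hy hy0 => (hbase y hy hy0).exists

theorem stmt_10 {Y : Type*} [NormedAddCommGroup Y] [NormedSpace ℝ Y] [PartialOrder Y]
    (hadd : ∀ x y z : Y, x ≤ y → x + z ≤ y + z)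
    (hsmul : ∀ (c : ℝ) (x y : Y), 0 ≤ c → x ≤ y → c • x ≤ c • y)
    (hconv : Convex ℝ {y : Y | 0 ≤ y}) :
    (∃ φ : Y →L[ℝ] ℝ, ∀ u : Y, 0 ≤ u → ‖u‖ ≤ φ u) ↔
      (∃ B : Set Y, B ⊆ {y : Y | 0 ≤ y} ∧ Convex ℝ B ∧ Bornology.IsBounded B ∧
        0 ∉ closure B ∧ ∀ y : Y, 0 ≤ y → y ≠ 0 → ∃! l : ℝ, 0 < l ∧ l • y ∈ B) :=
  stmt_10_general hsmul hconv
end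

section
/- Let X be a normed linear space with a norm ∥·∥ that is locally uniformly rotund at a point k ∈ X with ∥k∥ = 1, and suppose B(k, ε) ⊆ K for a convex cone K and some ε > 0. Let x* ∈ X* satisfy ∥x*∥ = x*(k) = 1. Then there exists α ∈ (0,1) such that the cone K_α := {x ∈ X : α∥x∥ < x*(x)} satisfies K_α ∩ S_X ⊆ B(k, ε/2), and hence K_α ⊆ int(K). -/
/-!
Since `‖φ‖ = 1 = φ k`, a unit vector `x` with `φ x` close to `1` has `‖x + k‖ ≥ φ (x + k) = φ x + 1`
close to `2`, so local uniform rotundity at `k` forces `x` close to `k`: some `α < 1` makes every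
unit vector of the cone `{x | α‖x‖ < φ x}` lie in `closedBall k (ε / 2)`, which sits inside the
interior of `K`. Both that cone and the interior of the cone `K` are invariant under positive
scaling, so the inclusion on the unit sphere propagates to the whole cone.
-/

open Filter Topology Metric Pointwise

section

variable {X : Type*} [NormedAddCommGroup X] [NormedSpace ℝ X]

theorem ContinuousLinearMap.apply_le_norm_of_opNorm_le_one {φ : X →L[ℝ] ℝ} (hφ : ‖φ‖ ≤ 1)
    (y : X) : φ y ≤ ‖y‖ :=
  calc φ y ≤ ‖φ‖ * ‖y‖ := (le_abs_self _).trans (φ.le_opNorm y)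
    _ ≤ ‖y‖ := mul_le_of_le_one_left (norm_nonneg _) hφ

theorem tendsto_norm_add_of_tendsto_apply {ι : Type*} {l : Filter ι} {k : X} (hk : ‖k‖ = 1)
    {φ : X →L[ℝ] ℝ} (hφ : ‖φ‖ ≤ 1) (hφk : φ k = 1) {x : ι → X} (hx : ∀ i, ‖x i‖ = 1)
    (hφx : Tendsto (fun i => φ (x i)) l (𝓝 1)) :
    Tendsto (fun i => ‖x i + k‖) l (𝓝 2) := by
  have hlower : Tendsto (fun i => φ (x i) + 1) l (𝓝 2) := by
    simpa [one_add_one_eq_two] using hφx.add_const 1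
  refine tendsto_of_tendsto_of_tendsto_of_le_of_le hlower tendsto_const_nhds (fun i => ?_)
    (fun i => ?_)
  · simpa [hφk] using φ.apply_le_norm_of_opNorm_le_one hφ (x i + k)
  · simpa [hx i, hk, one_add_one_eq_two] using norm_add_le (x i) k

/-- A point of local uniform rotundity is strongly exposed by every functional norming it. -/
theorem exists_forall_sphere_dist_le_of_locallyUniformlyRotund {k : X} (hk : ‖k‖ = 1)
    (hLUR : ∀ x : ℕ → X, (∀ n, ‖x n‖ = 1) →
      Tendsto (fun n => ‖x n + k‖) atTop (𝓝 2) → Tendsto x atTop (𝓝 k))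
    {φ : X →L[ℝ] ℝ} (hφ : ‖φ‖ ≤ 1) (hφk : φ k = 1) {δ : ℝ} (hδ : 0 < δ) :
    ∃ α < 1, ∀ x : X, ‖x‖ = 1 → α < φ x → dist x k ≤ δ := by
  by_contra! h
  choose x hx hφx hdist using fun n : ℕ => h (1 - 1 / (n + 1)) (by simp; positivity)
  have hφx_lim : Tendsto (fun n => φ (x n)) atTop (𝓝 1) := by
    have hlower : Tendsto (fun n : ℕ => 1 - 1 / ((n : ℝ) + 1)) atTop (𝓝 1) := by
      simpa using tendsto_one_div_add_atTop_nhds_zero_nat.const_sub (1 : ℝ)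
    refine tendsto_of_tendsto_of_tendsto_of_le_of_le hlower tendsto_const_nhds
      (fun n => (hφx n).le) (fun n => ?_)
    simpa [hx n] using φ.apply_le_norm_of_opNorm_le_one hφ (x n)
  have hlim := hLUR x hx (tendsto_norm_add_of_tendsto_apply hk hφ hφk hx hφx_lim)
  obtain ⟨n, hn⟩ := (hlim.eventually (closedBall_mem_nhds k hδ)).exists
  exact (hdist n).not_ge hn

theorem smul_mem_interior_of_smul_mem {K : Set X}
    (hK : ∀ (c : ℝ) (x : X), 0 ≤ c → x ∈ K → c • x ∈ K) {c : ℝ} (hc : 0 < c) {x : X}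
    (hx : x ∈ interior K) : c • x ∈ interior K := by
  have hsub : c • K ⊆ K := by
    rintro _ ⟨y, hy, rfl⟩
    exact hK c y hc.le hy
  exact interior_mono hsub (by rw [interior_smul₀ hc.ne']; exact Set.smul_mem_smul_set hx)

theorem mul_norm_lt_apply_smul_iff (α : ℝ) (φ : X →L[ℝ] ℝ) {c : ℝ} (hc : 0 < c) (x : X) :
    α * ‖c • x‖ < φ (c • x) ↔ α * ‖x‖ < φ x := by
  rw [norm_smul, map_smul, smul_eq_mul, Real.norm_of_nonneg hc.le, mul_left_comm,
    mul_lt_mul_iff_right₀ hc]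

end

theorem stmt_14_general {X : Type*} [NormedAddCommGroup X] [NormedSpace ℝ X]
    (k : X) (hk : ‖k‖ = 1)
    (hLUR : ∀ x : ℕ → X, (∀ n, ‖x n‖ = 1) →
      Tendsto (fun n => ‖x n + k‖) atTop (nhds 2) → Tendsto x atTop (nhds k))
    (K : Set X) (hKcone : ∀ (c : ℝ) (x : X), 0 ≤ c → x ∈ K → c • x ∈ K)
    (ε : ℝ) (hε : 0 < ε) (hball : Metric.closedBall k ε ⊆ K)
    (φ : X →L[ℝ] ℝ) (hφ : ‖φ‖ = 1) (hφk : φ k = 1) :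
    ∃ α : ℝ, α ∈ Set.Ioo (0 : ℝ) 1 ∧
      (∀ x : X, ‖x‖ = 1 → α * ‖x‖ < φ x → x ∈ Metric.closedBall k (ε / 2)) ∧
      {x : X | α * ‖x‖ < φ x} ⊆ interior K := by
  obtain ⟨α₀, hα₀, hα₀_sphere⟩ :=
    exists_forall_sphere_dist_le_of_locallyUniformlyRotund hk hLUR hφ.le hφk (half_pos hε)
  set α := max α₀ (1 / 2)
  have hsphere : ∀ x : X, ‖x‖ = 1 → α * ‖x‖ < φ x → x ∈ closedBall k (ε / 2) := by
    intro x hx hαx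
    rw [hx, mul_one] at hαx
    exact hα₀_sphere x hx ((le_max_left _ _).trans_lt hαx)
  refine ⟨α, ⟨by positivity, max_lt hα₀ (by norm_num)⟩, hsphere, fun x hx => ?_⟩
  have hx0 : x ≠ 0 := by rintro rfl; simp at hx
  have hnorm : 0 < ‖x‖ := norm_pos_iff.mpr hx0
  have hu : ‖x‖⁻¹ • x ∈ closedBall k (ε / 2) :=
    hsphere _ (by simp [norm_smul, hnorm.ne'])
      ((mul_norm_lt_apply_smul_iff α φ (inv_pos.mpr hnorm) x).mpr hx)
  have hball_int : closedBall k (ε / 2) ⊆ interior K :=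
    (closedBall_subset_ball (half_lt_self hε)).trans
      ((ball_subset_interior_closedBall).trans (interior_mono hball))
  simpa [smul_smul, hnorm.ne'] using smul_mem_interior_of_smul_mem hKcone hnorm (hball_int hu)

theorem stmt_14 {X : Type*} [NormedAddCommGroup X] [NormedSpace ℝ X]
    (k : X) (hk : ‖k‖ = 1)
    (hLUR : ∀ x : ℕ → X, (∀ n, ‖x n‖ = 1) →
      Tendsto (fun n => ‖x n + k‖) atTop (nhds 2) → Tendsto x atTop (nhds k))
    (K : Set X) (hKcone : ∀ (c : ℝ) (x : X), 0 ≤ c → x ∈ K → c • x ∈ K)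
    (hKconv : Convex ℝ K)
    (ε : ℝ) (hε : 0 < ε) (hball : Metric.closedBall k ε ⊆ K)
    (φ : X →L[ℝ] ℝ) (hφ : ‖φ‖ = 1) (hφk : φ k = 1) :
    ∃ α : ℝ, α ∈ Set.Ioo (0 : ℝ) 1 ∧
      (∀ x : X, ‖x‖ = 1 → α * ‖x‖ < φ x → x ∈ Metric.closedBall k (ε / 2)) ∧
      {x : X | α * ‖x‖ < φ x} ⊆ interior K :=
  stmt_14_general k hk hLUR K hKcone ε hε hball φ hφ hφk
end

section
/- Suppose D ⊆ X is a set such that (x − K_α) ∩ D = ∅ for every x ∈ D, where K_α = {x : α∥x∥ < x*(x)} for some α ∈ (0,1) and x* ∈ X* with ∥x*∥ = x*(k) = 1 for some k ∈ X, ∥k∥ = 1. Then the projection π : D → ker(x*) given by π(x) = x − x*(x)k is injective, and the function g : π(D) → ℝ defined by g(π(x)) = x*(x) is Lipschitz with constant 1/(1−α); consequently D is contained in a Lipschitz hypersurface. -/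
/-!
For `x, y ∈ D` the hypothesis says that neither `x - y` nor `y - x` lies in the cone `K_α`, i.e.
`|φ (x - y)| ≤ α ‖x - y‖`. With `π x = x - φ x • k` (`projKer φ k`), writing
`x - y = (π x - π y) + φ (x - y) • k` with `‖k‖ = 1` gives `‖x - y‖ ≤ ‖π x - π y‖ + |φ (x - y)|`,
hence `(1 - α) |φ x - φ y| ≤ ‖π x - π y‖`. So `φ` factors through `π` on `D` via a
`1/(1-α)`-Lipschitz function on `π D ⊆ ker φ`; extending it to `ker φ`, `D` lies on its graph
over `ker φ` in the direction `k`.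
-/

/-- `M` is a Lipschitz hypersurface. -/
def IsLipschitzHypersurface {X : Type*} [NormedAddCommGroup X] [NormedSpace ℝ X]
    (M : Set X) : Prop :=
  ∃ (φ : X →L[ℝ] ℝ) (v : X) (f : X → ℝ) (C : NNReal), v ≠ 0 ∧
    LipschitzOnWith C f {y : X | φ y = 0} ∧
    M = {z : X | ∃ y : X, φ y = 0 ∧ z = y + f y • v}

section

variable {X : Type*} [NormedAddCommGroup X] [NormedSpace ℝ X]

def projKer (φ : X →L[ℝ] ℝ) (k x : X) : X := x - φ x • k

section projKer

variable {φ : X →L[ℝ] ℝ} {k : X}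

lemma projKer_add_smul (x : X) : projKer φ k x + φ x • k = x :=
  sub_add_cancel x _

lemma apply_projKer (hk : φ k = 1) (x : X) : φ (projKer φ k x) = 0 := by
  simp [projKer, hk]

lemma projKer_sub_projKer (x y : X) :
    projKer φ k x - projKer φ k y = projKer φ k (x - y) := by
  simp only [projKer, map_sub, sub_smul]
  abel

end projKer

lemma abs_le_div_mul_norm_sub_smul {α t : ℝ} {z k : X} (hα₀ : 0 ≤ α) (hα₁ : α < 1)
    (hk : ‖k‖ ≤ 1) (ht : |t| ≤ α * ‖z‖) : |t| ≤ 1 / (1 - α) * ‖z - t • k‖ := by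
  have hz : ‖z‖ ≤ ‖z - t • k‖ + |t| :=
    calc ‖z‖ = ‖(z - t • k) + t • k‖ := by rw [sub_add_cancel]
      _ ≤ ‖z - t • k‖ + |t| * ‖k‖ := by
        simpa only [norm_smul, Real.norm_eq_abs] using norm_add_le (z - t • k) (t • k)
      _ ≤ ‖z - t • k‖ + |t| := by gcongr; exact mul_le_of_le_one_right (abs_nonneg t) hk
  rw [div_mul_eq_mul_div, one_mul, le_div_iff₀ (by linarith)]
  nlinarith [norm_nonneg (z - t • k)]

section ConeFree

variable {φ : X →L[ℝ] ℝ} {α : ℝ} {D : Set X}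

lemma abs_apply_sub_le_mul_norm_of_forall_not_lt
    (hD : ∀ x ∈ D, ∀ d ∈ D, ¬ (α * ‖x - d‖ < φ (x - d))) {x y : X} (hx : x ∈ D) (hy : y ∈ D) :
    |φ (x - y)| ≤ α * ‖x - y‖ := by
  refine abs_le.mpr ⟨?_, not_lt.mp (hD x hx y hy)⟩
  have hyx := not_lt.mp (hD y hy x hx)
  rw [← neg_sub, map_neg, norm_neg] at hyx
  linarith

lemma abs_sub_le_div_mul_norm_projKer_sub {k : X} (hα : α ∈ Set.Ioo 0 1) (hk : ‖k‖ ≤ 1)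
    (hD : ∀ x ∈ D, ∀ d ∈ D, ¬ (α * ‖x - d‖ < φ (x - d))) {x y : X} (hx : x ∈ D) (hy : y ∈ D) :
    |φ x - φ y| ≤ 1 / (1 - α) * ‖projKer φ k x - projKer φ k y‖ := by
  rw [projKer_sub_projKer, ← map_sub]
  exact abs_le_div_mul_norm_sub_smul hα.1.le hα.2 hk
    (abs_apply_sub_le_mul_norm_of_forall_not_lt hD hx hy)

end ConeFree

section Graph

variable {φ : X →L[ℝ] ℝ} {k : X} {D : Set X} {C : ℝ}

lemma injOn_projKer_of_abs_sub_le
    (h : ∀ x ∈ D, ∀ y ∈ D, |φ x - φ y| ≤ C * ‖projKer φ k x - projKer φ k y‖) :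
    Set.InjOn (projKer φ k) D := by
  intro x hx y hy hxy
  have hφ : φ x = φ y := by
    simpa [hxy, sub_eq_zero] using h x hx y hy
  rw [← projKer_add_smul (φ := φ) (k := k) x, ← projKer_add_smul (φ := φ) (k := k) y, hxy, hφ]

theorem exists_isLipschitzHypersurface_superset_of_abs_sub_le (hk : φ k = 1) (hC : 0 ≤ C)
    (h : ∀ x ∈ D, ∀ y ∈ D, |φ x - φ y| ≤ C * ‖projKer φ k x - projKer φ k y‖) :
    ∃ L : Set X, IsLipschitzHypersurface L ∧ D ⊆ L := by
  set g : X → ℝ := φ ∘ Function.invFunOn (projKer φ k) D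
  have hg : ∀ x ∈ D, g (projKer φ k x) = φ x := fun x hx => by
    simp only [g, Function.comp_apply, (injOn_projKer_of_abs_sub_le h).leftInvOn_invFunOn hx]
  have hlip : LipschitzOnWith C.toNNReal g (projKer φ k '' D) := by
    refine LipschitzOnWith.of_dist_le_mul ?_
    rintro _ ⟨x, hx, rfl⟩ _ ⟨y, hy, rfl⟩
    rw [hg x hx, hg y hy, Real.dist_eq, dist_eq_norm, Real.coe_toNNReal _ hC]
    exact h x hx y hy
  obtain ⟨f, hf, hfg⟩ := hlip.extend_real
  have hk₀ : k ≠ 0 := by rintro rfl; simp at hk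
  refine ⟨_, ⟨φ, k, f, C.toNNReal, hk₀, hf.lipschitzOnWith, rfl⟩, fun x hx => ?_⟩
  refine ⟨projKer φ k x, apply_projKer hk x, ?_⟩
  rw [← hfg (Set.mem_image_of_mem _ hx), hg x hx, projKer_add_smul]

end Graph

end

theorem stmt_15_general {X : Type*} [NormedAddCommGroup X] [NormedSpace ℝ X]
    (α : ℝ) (hα : α ∈ Set.Ioo (0 : ℝ) 1)
    (k : X) (hk : ‖k‖ = 1)
    (φ : X →L[ℝ] ℝ) (hφk : φ k = 1)
    (D : Set X)
    (hD : ∀ x ∈ D, ∀ d ∈ D, ¬ (α * ‖x - d‖ < φ (x - d))) :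
    (∀ x ∈ D, ∀ y ∈ D, x - φ x • k = y - φ y • k → x = y) ∧
    (∀ x ∈ D, ∀ y ∈ D,
      |φ x - φ y| ≤ (1 / (1 - α)) * ‖(x - φ x • k) - (y - φ y • k)‖) ∧
    (∃ L : Set X, IsLipschitzHypersurface L ∧ D ⊆ L) := by
  have hlip : ∀ x ∈ D, ∀ y ∈ D,
      |φ x - φ y| ≤ 1 / (1 - α) * ‖projKer φ k x - projKer φ k y‖ :=
    fun x hx y hy => abs_sub_le_div_mul_norm_projKer_sub hα hk.le hD hx hy
  have hC : 0 ≤ 1 / (1 - α) := by have := hα.2; positivity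
  exact ⟨fun x hx y hy => injOn_projKer_of_abs_sub_le hlip hx hy, hlip,
    exists_isLipschitzHypersurface_superset_of_abs_sub_le hφk hC hlip⟩

theorem stmt_15 {X : Type*} [NormedAddCommGroup X] [NormedSpace ℝ X]
    (α : ℝ) (hα : α ∈ Set.Ioo (0 : ℝ) 1)
    (k : X) (hk : ‖k‖ = 1)
    (φ : X →L[ℝ] ℝ) (hφ : ‖φ‖ = 1) (hφk : φ k = 1)
    (D : Set X)
    (hD : ∀ x ∈ D, ∀ d ∈ D, ¬ (α * ‖x - d‖ < φ (x - d))) :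
    (∀ x ∈ D, ∀ y ∈ D, x - φ x • k = y - φ y • k → x = y) ∧
    (∀ x ∈ D, ∀ y ∈ D,
      |φ x - φ y| ≤ (1 / (1 - α)) * ‖(x - φ x • k) - (y - φ y • k)‖) ∧
    (∃ L : Set X, IsLipschitzHypersurface L ∧ D ⊆ L) :=
  stmt_15_general α hα k hk φ hφk D hD
end

section
/- There exists a mapping f : ℝ → ℓ₂ that is (ℝ₊, K)-increasing, where K is the non-negative cone of ℓ₂ (coordinatewise non-negative sequences), but f is nowhere differentiable. -/
/-!
Index the coordinates of `ℓ²` by pairs `(n, k) ∈ ℕ × ℤ` and let coordinate `(n, k)` of `f t` jump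
by `2⁻ⁿ` when `t` crosses the dyadic point `k 2⁻ⁿ`. Every coordinate is nondecreasing, and at
level `n` at most `2 |t| 2ⁿ + 3` coordinates of `f t` are nonzero, each of size `2⁻ⁿ`, so `f t` is
square summable. Near any `x`, the first dyadic point `p` of level `n` to the right of `x` satisfies
`p - x ≤ 2⁻ⁿ`, while `‖f p - f u‖ ≥ 2⁻ⁿ` for every `u ∈ [x, p)`. A derivative at `x` would make
`f p - f u` equal to `f' (p - u)` up to `o(2⁻ⁿ)`, which tends to `0` as `u → p⁻`.
-/

open scoped ENNReal
open Set Filter Topology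

noncomputable section

section Calculus

variable {E : Type*} [NormedAddCommGroup E] [NormedSpace ℝ E] {f : ℝ → E}

theorem HasDerivAt.exists_norm_sub_le {f' : E} {x ε : ℝ} (hf : HasDerivAt f f' x) (hε : 0 < ε) :
    ∃ δ > 0, ∀ u v, |u - x| < δ → |v - x| < δ →
      ‖f v - f u‖ ≤ ‖f'‖ * |v - u| + ε * (|u - x| + |v - x|) := by
  obtain ⟨δ, hδ, hball⟩ := Metric.eventually_nhds_iff.1 (hf.isLittleO.def hε)
  refine ⟨δ, hδ, fun u v hu hv => ?_⟩
  have hu' : ‖f u - f x - (u - x) • f'‖ ≤ ε * |u - x| := hball (by rwa [Real.dist_eq])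
  have hv' : ‖f v - f x - (v - x) • f'‖ ≤ ε * |v - x| := hball (by rwa [Real.dist_eq])
  calc ‖f v - f u‖
      = ‖(v - u) • f' + ((f v - f x - (v - x) • f') - (f u - f x - (u - x) • f'))‖ := by
        rw [show v - u = (v - x) - (u - x) by ring, sub_smul]
        congr 1
        abel
    _ ≤ ‖(v - u) • f'‖ + (‖f v - f x - (v - x) • f'‖ + ‖f u - f x - (u - x) • f'‖) :=
        (norm_add_le _ _).trans (add_le_add_right (norm_sub_le _ _) _)
    _ ≤ ‖f'‖ * |v - u| + ε * (|u - x| + |v - x|) := by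
        rw [norm_smul, Real.norm_eq_abs, mul_comm]
        linarith

theorem not_differentiableAt_of_forall_jump {x : ℝ}
    (hjump : ∀ δ > 0, ∃ p c, x < p ∧ p - x ≤ c ∧ c < δ ∧ ∀ u ∈ Ico x p, c ≤ ‖f p - f u‖) :
    ¬ DifferentiableAt ℝ f x := by
  intro hdiff
  obtain ⟨δ, hδ, hle⟩ := hdiff.hasDerivAt.exists_norm_sub_le (by norm_num : (0 : ℝ) < 1 / 4)
  obtain ⟨p, c, hxp, hpc, hcδ, hc⟩ := hjump δ hδ
  have hbound : ∀ u ∈ Ico x p, c / 2 ≤ ‖deriv f x‖ * (p - u) := by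
    rintro u ⟨hxu, hup⟩
    have := hle u p (by rw [abs_of_nonneg (sub_nonneg.2 hxu)]; linarith)
      (by rw [abs_of_pos (sub_pos.2 hxp)]; linarith)
    rw [abs_of_pos (sub_pos.2 hup), abs_of_nonneg (sub_nonneg.2 hxu),
      abs_of_pos (sub_pos.2 hxp)] at this
    linarith [hc u ⟨hxu, hup⟩]
  have hlim : Tendsto (fun u => ‖deriv f x‖ * (p - u)) (𝓝[<] p) (𝓝 0) := by
    have hcont : Continuous fun u : ℝ => ‖deriv f x‖ * (p - u) := by fun_prop
    simpa using (hcont.tendsto p).mono_left nhdsWithin_le_nhds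
  linarith [ge_of_tendsto hlim (eventually_of_mem (Ico_mem_nhdsLT hxp) hbound)]

end Calculus

namespace DyadicStaircase

/-- A step of height `h` at `k * h`, shifted so that it vanishes at `0`. -/
def jump (h : ℝ) (k : ℤ) (t : ℝ) : ℝ :=
  h * ((if k * h ≤ t then 1 else 0) - (if k * h ≤ 0 then 1 else 0))

variable {h : ℝ} {k : ℤ}

theorem jump_mono (hh : 0 ≤ h) : Monotone (jump h k) := by
  intro s t hst
  unfold jump
  gcongr
  split_ifs with hs ht <;> norm_num
  exact ht (hs.trans hst)

theorem abs_jump_le (hh : 0 ≤ h) (t : ℝ) : |jump h k t| ≤ h := by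
  unfold jump
  rw [abs_mul, abs_of_nonneg hh]
  exact mul_le_of_le_one_right hh (by split_ifs <;> norm_num)

theorem jump_eq_zero_of_abs_lt {t : ℝ} (ht : |t| < |k * h|) : jump h k t = 0 := by
  unfold jump
  rcases le_or_gt ((k : ℝ) * h) 0 with hk | hk
  · rw [abs_of_nonpos hk] at ht
    rw [if_pos hk, if_pos (by linarith [neg_abs_le t])]
    ring
  · rw [abs_of_pos hk] at ht
    rw [if_neg hk.not_ge, if_neg (by linarith [le_abs_self t])]
    ring

theorem jump_self_sub_jump {u : ℝ} (hu : u < k * h) : jump h k (k * h) - jump h k u = h := by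
  unfold jump
  rw [if_pos le_rfl, if_neg hu.not_ge]
  ring

theorem jump_eq_zero_of_notMem_Icc (hh : 0 < h) {t : ℝ}
    (hk : k ∉ Finset.Icc (-(⌈|t| / h⌉₊ : ℤ)) ⌈|t| / h⌉₊) : jump h k t = 0 := by
  apply jump_eq_zero_of_abs_lt
  have hN : (⌈|t| / h⌉₊ : ℝ) < |(k : ℝ)| := by
    rw [Finset.mem_Icc, ← abs_le, not_le] at hk
    exact_mod_cast hk
  rw [abs_mul, abs_of_pos hh, ← div_lt_iff₀ hh]
  exact (Nat.le_ceil _).trans_lt hN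

theorem summable_sq_jump (hh : 0 < h) (t : ℝ) : Summable fun k => jump h k t ^ 2 :=
  summable_of_ne_finset_zero fun k hk => by rw [jump_eq_zero_of_notMem_Icc hh hk, sq, zero_mul]

theorem tsum_sq_jump_le (hh : 0 < h) (t : ℝ) :
    ∑' k, jump h k t ^ 2 ≤ (2 * |t| + 3 * h) * h := by
  set N := ⌈|t| / h⌉₊
  have hcard : ((Finset.Icc (-(N : ℤ)) N).card : ℝ) = 2 * N + 1 := by
    rw [Int.card_Icc, show (N : ℤ) + 1 - -N = ((2 * N + 1 : ℕ) : ℤ) by push_cast; ring,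
      Int.toNat_natCast]
    push_cast
    ring
  have hN : (N : ℝ) < |t| / h + 1 := Nat.ceil_lt_add_one (by positivity)
  calc ∑' k, jump h k t ^ 2
      = ∑ k ∈ Finset.Icc (-(N : ℤ)) N, jump h k t ^ 2 :=
        tsum_eq_sum fun k hk => by rw [jump_eq_zero_of_notMem_Icc hh hk, sq, zero_mul]
    _ ≤ (Finset.Icc (-(N : ℤ)) N).card • h ^ 2 :=
        Finset.sum_le_card_nsmul _ _ _ fun k _ =>
          sq_le_sq.2 ((abs_jump_le hh.le t).trans (le_abs_self h))
    _ ≤ (2 * (|t| / h + 1) + 1) * h ^ 2 := by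
        rw [nsmul_eq_mul, hcard]
        gcongr
    _ = (2 * |t| + 3 * h) * h := by
        field_simp
        ring

def dyadicJumps (t : ℝ) (q : ℕ × ℤ) : ℝ := jump ((2 : ℝ)⁻¹ ^ q.1) q.2 t

theorem summable_sq_dyadicJumps (t : ℝ) : Summable fun q => dyadicJumps t q ^ 2 := by
  have hpos (n : ℕ) : (0 : ℝ) < 2⁻¹ ^ n := by positivity
  have hrow (n : ℕ) : ∑' k, dyadicJumps t (n, k) ^ 2 ≤ (2 * |t| + 3) * 2⁻¹ ^ n := by
    refine (tsum_sq_jump_le (hpos n) t).trans ?_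
    gcongr
    exact mul_le_of_le_one_right (by norm_num) (pow_le_one₀ (by norm_num) (by norm_num))
  have hgeom : Summable fun n : ℕ => (2 * |t| + 3) * (2 : ℝ)⁻¹ ^ n :=
    (summable_geometric_of_lt_one (by norm_num) (by norm_num)).mul_left _
  exact (summable_prod_of_nonneg fun q => sq_nonneg _).2 ⟨fun n => summable_sq_jump (hpos n) t,
    hgeom.of_nonneg_of_le (fun n => tsum_nonneg fun k => sq_nonneg _) hrow⟩

def index : ℕ ≃ ℕ × ℤ := (Denumerable.eqv (ℕ × ℤ)).symm

theorem memℓp_dyadicJumps (t : ℝ) : Memℓp (fun m => dyadicJumps t (index m)) 2 := by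
  refine (memℓp_gen_iff (by norm_num)).2 ?_
  simpa [Real.rpow_two, Function.comp_def] using
    index.summable_iff.2 (summable_sq_dyadicJumps t)

def staircase (t : ℝ) : lp (fun _ : ℕ => ℝ) 2 :=
  ⟨fun m => dyadicJumps t (index m), memℓp_dyadicJumps t⟩

theorem staircase_index_symm (t : ℝ) (n : ℕ) (k : ℤ) :
    staircase t (index.symm (n, k)) = jump (2⁻¹ ^ n) k t :=
  congrArg (dyadicJumps t) (index.apply_symm_apply (n, k))

theorem staircase_mono {s t : ℝ} (hst : s ≤ t) (m : ℕ) : staircase s m ≤ staircase t m :=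
  jump_mono (by positivity) hst

theorem le_norm_staircase_sub {n : ℕ} {u : ℝ} (hu : u < k * 2⁻¹ ^ n) :
    (2 : ℝ)⁻¹ ^ n ≤ ‖staircase (k * 2⁻¹ ^ n) - staircase u‖ := by
  have hcoord : (staircase (k * 2⁻¹ ^ n) - staircase u) (index.symm (n, k)) = (2 : ℝ)⁻¹ ^ n := by
    rw [lp.coeFn_sub, Pi.sub_apply, staircase_index_symm, staircase_index_symm,
      jump_self_sub_jump hu]
  calc (2 : ℝ)⁻¹ ^ n
      = ‖(staircase (k * 2⁻¹ ^ n) - staircase u) (index.symm (n, k))‖ := by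
        rw [hcoord, Real.norm_of_nonneg (by positivity)]
    _ ≤ ‖staircase (k * 2⁻¹ ^ n) - staircase u‖ := lp.norm_apply_le_norm two_ne_zero _ _

end DyadicStaircase

open DyadicStaircase in
theorem stmt_17 :
    ∃ f : ℝ → lp (fun _ : ℕ => ℝ) 2,
      (∀ s t : ℝ, s ≤ t → ∀ n : ℕ, f s n ≤ f t n) ∧
      ∀ x : ℝ, ¬ DifferentiableAt ℝ f x := by
  refine ⟨staircase, fun s t hst m => staircase_mono hst m, fun x => ?_⟩
  refine not_differentiableAt_of_forall_jump fun δ hδ => ?_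
  obtain ⟨n, hn⟩ := exists_pow_lt_of_lt_one hδ (by norm_num : (2 : ℝ)⁻¹ < 1)
  have hpos : (0 : ℝ) < 2⁻¹ ^ n := by positivity
  obtain ⟨k, hkx, hxk⟩ := (existsUnique_zsmul_near_of_pos hpos x).exists
  rw [zsmul_eq_mul] at hkx hxk
  refine ⟨((k + 1 : ℤ) : ℝ) * 2⁻¹ ^ n, 2⁻¹ ^ n, hxk, ?_, hn,
    fun u hu => le_norm_staircase_sub hu.2⟩
  push_cast at hkx ⊢
  linarith
end
end

section
/- There exist a positive sequence (aₙ) and an increasing sequence (mₙ) of natural numbers such that Σₙ aₙ² < ∞ and Σ_{j=mₙ}^{mₙ₊₁−1} aⱼ = 2n for every n ≥ 1. -/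
/-!
Spread the mass `2n` evenly over the dyadic block `[2ⁿ, 2ⁿ⁺¹)`, i.e. take `mₙ = 2ⁿ` and
`aⱼ = 2n / 2ⁿ` for `j` in that block. The squares then contribute `4n² / 2ⁿ` per block, and since
`aⱼ` is non-increasing, Cauchy condensation reduces `∑ aⱼ²` to the convergent series `∑ 4n² / 2ⁿ`.
-/

open Finset

lemma sum_Ico_two_pow_comp_log {M : Type*} [AddCommMonoid M] (g : ℕ → M) (n : ℕ) :
    ∑ j ∈ Ico (2 ^ n) (2 ^ (n + 1)), g (Nat.log 2 j) = 2 ^ n • g n := by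
  rw [sum_congr rfl fun j hj => by
      rw [Nat.log_eq_of_pow_le_of_lt_pow (mem_Ico.1 hj).1 (mem_Ico.1 hj).2],
    sum_const, Nat.card_Ico, pow_succ, mul_two, Nat.add_sub_cancel]

lemma summable_comp_log_two_iff {g : ℕ → ℝ} (hg : 0 ≤ g) (hg_anti : Antitone g) :
    Summable (fun j => g (Nat.log 2 j)) ↔ Summable (fun k => 2 ^ k * g k) := by
  rw [← summable_condensed_iff_of_nonneg (fun _ => hg _)
    fun _ _ _ hmn => hg_anti (Nat.log_mono_right hmn)]
  simp only [Nat.log_pow one_lt_two]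

-- The `max` only matters for `n = 0` (the indices `j = 0, 1`), where it keeps `aⱼ` positive.
noncomputable def blockHeight (n : ℕ) : ℝ := (max 1 (2 * n) : ℕ) / 2 ^ n

lemma blockHeight_pos (n : ℕ) : 0 < blockHeight n := by
  unfold blockHeight
  positivity

lemma blockHeight_antitone : Antitone blockHeight := by
  refine antitone_nat_of_succ_le fun n => ?_
  have h : n + 1 ≤ max 1 (2 * n) := by omega
  rw [blockHeight, blockHeight, max_eq_right (by omega), pow_succ]
  calc ((2 * (n + 1) : ℕ) : ℝ) / (2 ^ n * 2) = ((n + 1 : ℕ) : ℝ) / 2 ^ n := by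
        push_cast
        field_simp
    _ ≤ _ := by gcongr

lemma two_pow_mul_blockHeight {n : ℕ} (hn : 1 ≤ n) : 2 ^ n * blockHeight n = 2 * n := by
  rw [blockHeight, max_eq_right (by omega)]
  push_cast
  field_simp

lemma summable_two_pow_mul_blockHeight_sq : Summable fun k => 2 ^ k * blockHeight k ^ 2 := by
  have hbound (k : ℕ) :
      2 ^ k * blockHeight k ^ 2 ≤ (1 / 2) ^ k + 4 * ((k : ℝ) ^ 2 * (1 / 2) ^ k) := by
    have hmax : ((max 1 (2 * k) : ℕ) : ℝ) ^ 2 ≤ 1 + 4 * (k : ℝ) ^ 2 := by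
      rcases max_choice 1 (2 * k) with h | h <;> rw [h] <;> push_cast <;> nlinarith
    calc 2 ^ k * blockHeight k ^ 2 = ((max 1 (2 * k) : ℕ) : ℝ) ^ 2 / 2 ^ k := by
          rw [blockHeight]
          field_simp
      _ ≤ (1 + 4 * (k : ℝ) ^ 2) / 2 ^ k := by gcongr
      _ = _ := by simp only [one_div, inv_pow]; ring
  refine Summable.of_nonneg_of_le (fun k => by positivity) hbound ?_
  exact summable_geometric_two.add
    ((summable_pow_mul_geometric_of_norm_lt_one (R := ℝ) 2 (r := 1 / 2) (by norm_num)).mul_left 4)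

theorem stmt_19 :
    ∃ (a : ℕ → ℝ) (m : ℕ → ℕ), (∀ n, 0 < a n) ∧ StrictMono m ∧
      Summable (fun n => (a n) ^ 2) ∧
      ∀ n : ℕ, 1 ≤ n → ∑ j ∈ Finset.Ico (m n) (m (n + 1)), a j = 2 * n := by
  refine ⟨fun j => blockHeight (Nat.log 2 j), (2 ^ ·), fun _ => blockHeight_pos _,
    pow_right_strictMono₀ one_lt_two, ?_, fun n hn => ?_⟩
  · have hsq_anti : Antitone fun n => blockHeight n ^ 2 := fun _ _ h =>
      pow_le_pow_left₀ (blockHeight_pos _).le (blockHeight_antitone h) 2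
    exact (summable_comp_log_two_iff (fun _ => sq_nonneg _) hsq_anti).2
      summable_two_pow_mul_blockHeight_sq
  · rw [sum_Ico_two_pow_comp_log blockHeight, nsmul_eq_mul, Nat.cast_pow,
      Nat.cast_ofNat, two_pow_mul_blockHeight hn]
end
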